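/- arXiv:1105.5823 — 4 statements merged into one kernel-verified Lean document; each statement's English description precedes it below -/
import Mathlib

section
/- Let d ≥ 3 and let ψ₁ ≤ ψ₂ ≤ ... ≤ ψ_d be real numbers with ψ₁ + ... + ψ_d ≤ 0. Then for every p with 1 ≤ p ≤ d−2, writing Ψ_p = ψ₁ + ... + ψ_p, one has ((p+1)/p)·Ψ_p ≤ Ψ_{p+1} ≤ ((d−p−1)/(d−p))·Ψ_p. -/
/-!
Write `S = Ψ_p` and `a = ψ_{p+1}`. Monotonicity gives `S ≤ p a`, since each of the first `p`
terms is at most `a`, and `S + (d - p) a ≤ Ψ_d ≤ 0`, since each of the last `d - p` terms is at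
least `a`. Dividing by `p` and by `d - p`, these are exactly the lower and the upper bound.
-/

open Finset

theorem monotoneOn_Icc_of_le_succ {β : Type*} [Preorder β] {f : ℕ → β} {a b : ℕ}
    (h : ∀ i, a ≤ i → i < b → f i ≤ f (i + 1)) : MonotoneOn f (Set.Icc a b) :=
  monotoneOn_of_le_add_one Set.ordConnected_Icc fun i _ hi hi' => h i hi.1 hi'.2

section MonotoneSums

variable {f : ℕ → ℝ} {m n : ℕ}

theorem sum_Ico_le_mul_of_monotoneOn (hmn : m ≤ n) (hf : MonotoneOn f (Set.Icc m n)) :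
    ∑ i ∈ Ico m n, f i ≤ ((n : ℝ) - m) * f n := by
  have h := sum_le_card_nsmul (Ico m n) f (f n) fun i hi =>
    hf ⟨(mem_Ico.1 hi).1, (mem_Ico.1 hi).2.le⟩ ⟨hmn, le_rfl⟩ (mem_Ico.1 hi).2.le
  rwa [Nat.card_Ico, nsmul_eq_mul, Nat.cast_sub hmn] at h

theorem mul_le_sum_Ioc_of_monotoneOn (hmn : m ≤ n) (hf : MonotoneOn f (Set.Icc m n)) :
    ((n : ℝ) - m) * f m ≤ ∑ i ∈ Ioc m n, f i := by
  have h := card_nsmul_le_sum (Ioc m n) f (f m) fun i hi =>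
    hf ⟨le_rfl, hmn⟩ ⟨(mem_Ioc.1 hi).1.le, (mem_Ioc.1 hi).2⟩ (mem_Ioc.1 hi).1.le
  rwa [Nat.card_Ioc, nsmul_eq_mul, Nat.cast_sub hmn] at h

theorem sum_Icc_le_mul_of_monotoneOn (hf : MonotoneOn f (Set.Icc 1 (n + 1))) :
    ∑ i ∈ Icc 1 n, f i ≤ n * f (n + 1) := by
  simpa [Ico_add_one_right_eq_Icc] using sum_Ico_le_mul_of_monotoneOn (by omega) hf

theorem sum_Icc_add_mul_le_sum_Icc (hmn : m < n) (hf : MonotoneOn f (Set.Icc (m + 1) n)) :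
    ∑ i ∈ Icc 1 m, f i + ((n : ℝ) - m) * f (m + 1) ≤ ∑ i ∈ Icc 1 n, f i := by
  have htail := mul_le_sum_Ioc_of_monotoneOn hmn hf
  have hIcc : ∀ k, Icc 1 k = Ioc 0 k := Icc_add_one_left_eq_Ioc 0
  rw [hIcc, hIcc, ← sum_Ioc_consecutive f (Nat.zero_le (m + 1)) hmn,
    sum_Ioc_succ_top (Nat.zero_le m)]
  push_cast at htail
  linarith

end MonotoneSums

theorem div_mul_le_add_of_le_mul {p S a : ℝ} (hp : 0 < p) (h : S ≤ p * a) :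
    (p + 1) / p * S ≤ S + a := by
  rw [div_mul_eq_mul_div, div_le_iff₀ hp]
  linarith

theorem add_le_div_mul_of_add_mul_nonpos {q S a : ℝ} (hq : 0 < q) (h : S + q * a ≤ 0) :
    S + a ≤ (q - 1) / q * S := by
  rw [div_mul_eq_mul_div, le_div_iff₀ hq]
  nlinarith

theorem stmt_1_general (d : ℕ) (ψ : ℕ → ℝ)
    (hmono : ∀ i, 1 ≤ i → i < d → ψ i ≤ ψ (i + 1))
    (hsum : ∑ i ∈ Finset.Icc 1 d, ψ i ≤ 0)
    (p : ℕ) (hp1 : 1 ≤ p) (hp2 : p ≤ d - 2) :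
    (((p : ℝ) + 1) / p) * (∑ i ∈ Finset.Icc 1 p, ψ i) ≤ ∑ i ∈ Finset.Icc 1 (p + 1), ψ i ∧
    ∑ i ∈ Finset.Icc 1 (p + 1), ψ i ≤
      (((d : ℝ) - p - 1) / ((d : ℝ) - p)) * (∑ i ∈ Finset.Icc 1 p, ψ i) := by
  have hpd : p + 2 ≤ d := by omega
  have hψ : MonotoneOn ψ (Set.Icc 1 d) := monotoneOn_Icc_of_le_succ hmono
  have hhead : ∑ i ∈ Icc 1 p, ψ i ≤ p * ψ (p + 1) :=
    sum_Icc_le_mul_of_monotoneOn (hψ.mono (Set.Icc_subset_Icc_right (by omega)))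
  have htotal : ∑ i ∈ Icc 1 p, ψ i + ((d : ℝ) - p) * ψ (p + 1) ≤ 0 :=
    (sum_Icc_add_mul_le_sum_Icc (by omega) (hψ.mono (Set.Icc_subset_Icc_left (by omega)))).trans
      hsum
  have hp : (0 : ℝ) < p := by exact_mod_cast hp1
  have hdp : (0 : ℝ) < (d : ℝ) - p := by
    rw [sub_pos]
    exact_mod_cast (by omega : p < d)
  rw [sum_Icc_succ_top (by omega)]
  exact ⟨div_mul_le_add_of_le_mul hp hhead, add_le_div_mul_of_add_mul_nonpos hdp htotal⟩

/-- Proposition 3: for a nondecreasing sequence of reals with nonpositive total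
sum, consecutive partial sums satisfy the two-sided multiplicative sandwich
`((p+1)/p)·Ψ_p ≤ Ψ_{p+1} ≤ ((d−p−1)/(d−p))·Ψ_p`. -/
theorem stmt_1 (d : ℕ) (hd : 3 ≤ d) (ψ : ℕ → ℝ)
    (hmono : ∀ i, 1 ≤ i → i < d → ψ i ≤ ψ (i + 1))
    (hsum : ∑ i ∈ Finset.Icc 1 d, ψ i ≤ 0)
    (p : ℕ) (hp1 : 1 ≤ p) (hp2 : p ≤ d - 2) :
    (((p : ℝ) + 1) / p) * (∑ i ∈ Finset.Icc 1 p, ψ i) ≤ ∑ i ∈ Finset.Icc 1 (p + 1), ψ i ∧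
    ∑ i ∈ Finset.Icc 1 (p + 1), ψ i ≤
      (((d : ℝ) - p - 1) / ((d : ℝ) - p)) * (∑ i ∈ Finset.Icc 1 p, ψ i) :=
  stmt_1_general d ψ hmono hsum p hp1 hp2
end

section
/- Let m, n be positive integers with d = m + n ≥ 3. Suppose s, s′ > 0 and ψ₁(s), ψ₁(s′), ψ₂(s) are reals satisfying s(1 + ψ₁(s)) = s′(1 + ψ₁(s′)) ≥ 0 and s(ψ₂(s) − m/n) ≤ s′(ψ₁(s′) − m/n), with s′ ≤ s and ψ₁(s′) ≠ −1. Then ψ₂(s) ≤ ψ₁(s) + d·(ψ₁(s′) − ψ₁(s))/(n + n·ψ₁(s′)). -/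
/-! Eliminating `m/n` between the two relations gives `n s (ψ₂ - ψ₁) ≤ d (s - s')`, and the
equality `s (1 + ψ₁) = s' (1 + ψ₁')` rewrites `s - s'` as `s (ψ₁' - ψ₁) / (1 + ψ₁')`; dividing
by `n s` yields the bound. -/

section Scaling

variable {m n s s' a a' b : ℝ}

lemma mul_sub_le_of_scaling (hn : 0 < n) (heq : s * (1 + a) = s' * (1 + a'))
    (hineq : s * (b - m / n) ≤ s' * (a' - m / n)) :
    n * s * (b - a) ≤ (m + n) * (s - s') := by
  have hmn : n * (m / n) = m := mul_div_cancel₀ m hn.ne'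
  linear_combination n * hineq - n * heq + (s - s') * hmn

lemma sub_eq_of_scaling (heq : s * (1 + a) = s' * (1 + a')) (ha' : 1 + a' ≠ 0) :
    s - s' = s * (a' - a) / (1 + a') := by
  rw [eq_div_iff ha']
  linear_combination heq

lemma le_add_div_of_scaling (hn : 0 < n) (hs : 0 < s) (ha' : 0 < 1 + a')
    (heq : s * (1 + a) = s' * (1 + a')) (hineq : s * (b - m / n) ≤ s' * (a' - m / n)) :
    b ≤ a + (m + n) * (a' - a) / (n + n * a') := by
  have key := mul_sub_le_of_scaling hn heq hineq
  rw [sub_eq_of_scaling heq ha'.ne'] at key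
  have hna : 0 < n + n * a' := by linarith [mul_pos hn ha']
  rw [← sub_le_iff_le_add', le_div_iff₀ hna]
  have : s * ((b - a) * (n + n * a')) ≤ s * ((m + n) * (a' - a)) :=
    calc s * ((b - a) * (n + n * a')) = n * s * (b - a) * (1 + a') := by ring
      _ ≤ (m + n) * (s * (a' - a) / (1 + a')) * (1 + a') := by gcongr
      _ = s * ((m + n) * (a' - a)) := by field_simp
  exact le_of_mul_le_mul_left this hs

end Scaling

theorem stmt_5_general (m n : ℕ) (hn : 0 < n) (d : ℕ) (hd : d = m + n)
    (s s' ψ₁s ψ₁s' ψ₂s : ℝ) (hs : 0 < s) (hs' : 0 < s')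
    (heq : s * (1 + ψ₁s) = s' * (1 + ψ₁s'))
    (hnonneg : 0 ≤ s' * (1 + ψ₁s'))
    (hineq : s * (ψ₂s - (m : ℝ) / n) ≤ s' * (ψ₁s' - (m : ℝ) / n))
    (hne : ψ₁s' ≠ -1) :
    ψ₂s ≤ ψ₁s + (d : ℝ) * (ψ₁s' - ψ₁s) / ((n : ℝ) + n * ψ₁s') := by
  have hc : 0 < 1 + ψ₁s' :=
    (nonneg_of_mul_nonneg_right hnonneg hs').lt_of_ne' fun h => hne (by linarith)
  rw [hd, Nat.cast_add]
  exact le_add_div_of_scaling (by exact_mod_cast hn) hs hc heq hineq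

/-- First half of Lemma 1 (arithmetic content): from the scaling relations
`s(1+ψ₁(s)) = s′(1+ψ₁(s′)) ≥ 0` and `s(ψ₂(s) − m/n) ≤ s′(ψ₁(s′) − m/n)`,
with `s′ ≤ s` and `ψ₁(s′) ≠ −1`, one gets
`ψ₂(s) ≤ ψ₁(s) + d·(ψ₁(s′) − ψ₁(s))/(n + n·ψ₁(s′))`. -/
theorem stmt_5 (m n : ℕ) (hm : 0 < m) (hn : 0 < n) (d : ℕ) (hd : d = m + n)
    (hd3 : 3 ≤ d) (s s' ψ₁s ψ₁s' ψ₂s : ℝ) (hs : 0 < s) (hs' : 0 < s')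
    (heq : s * (1 + ψ₁s) = s' * (1 + ψ₁s'))
    (hnonneg : 0 ≤ s' * (1 + ψ₁s'))
    (hineq : s * (ψ₂s - (m : ℝ) / n) ≤ s' * (ψ₁s' - (m : ℝ) / n))
    (hle : s' ≤ s) (hne : ψ₁s' ≠ -1) :
    ψ₂s ≤ ψ₁s + (d : ℝ) * (ψ₁s' - ψ₁s) / ((n : ℝ) + n * ψ₁s') :=
  stmt_5_general m n hn d hd s s' ψ₁s ψ₁s' ψ₂s hs hs' heq hnonneg hineq hne
end

section
/- Let m, n be positive integers with d = m + n ≥ 3. Suppose s, s′ > 0 and ψ₁(s), ψ₁(s′), ψ₂(s) are reals satisfying s(ψ₁(s) − m/n) = s′(ψ₁(s′) − m/n) < 0 and s(1 + ψ₂(s)) ≤ s′(1 + ψ₁(s′)), with s′ ≥ s. Then ψ₂(s) ≤ ψ₁(s) + d·(ψ₁(s′) − ψ₁(s))/(m − n·ψ₁(s′)). -/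
/-!
Put `a = m - n ψ₁(s)` and `b = m - n ψ₁(s′)`. The hypothesis on the two scales says `s a = s′ b` with
`b > 0`, so multiplying `s (1 + ψ₂(s)) ≤ s′ (1 + ψ₁(s′))` by `b` and dividing by `s` gives
`(1 + ψ₂(s)) b ≤ a (1 + ψ₁(s′))`. Since `a (1 + ψ₁(s′)) - (1 + ψ₁(s)) b = (m + n)(ψ₁(s′) - ψ₁(s))`,
dividing by `b` is the claim.
-/

theorem mul_sub_mul_eq_of_mul_sub_div_eq {K : Type*} [Field K] {m n x y s s' : K} (hn : n ≠ 0)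
    (h : s * (x - m / n) = s' * (y - m / n)) : s * (m - n * x) = s' * (m - n * y) := by
  have hdiv : ∀ t : K, m - n * t = -n * (t - m / n) := fun t => by field_simp; ring
  rw [hdiv, hdiv, mul_left_comm, h, mul_left_comm]

section

variable {K : Type*} [Field K] [LinearOrder K] [IsStrictOrderedRing K]

theorem mul_le_mul_of_mul_eq_of_mul_le {s s' a b u v : K} (hs : 0 < s) (hb : 0 ≤ b)
    (hscale : s * a = s' * b) (huv : s * u ≤ s' * v) : u * b ≤ a * v := by
  refine le_of_mul_le_mul_left ?_ hs
  calc s * (u * b) = s * u * b := by ring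
    _ ≤ s' * v * b := mul_le_mul_of_nonneg_right huv hb
    _ = s * (a * v) := by rw [mul_right_comm, ← hscale]; ring

theorem le_add_div_of_mul_sub_le {m n x y z : K} (hb : 0 < m - n * y)
    (h : (1 + z) * (m - n * y) ≤ (m - n * x) * (1 + y)) :
    z ≤ x + (m + n) * (y - x) / (m - n * y) := by
  rw [← sub_le_iff_le_add', le_div_iff₀ hb]
  linarith

end

theorem stmt_6_general (m n : ℕ) (hn : 0 < n) (d : ℕ) (hd : d = m + n)
    (s s' ψ₁s ψ₁s' ψ₂s : ℝ) (hs : 0 < s) (hs' : 0 < s')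
    (heq : s * (ψ₁s - (m : ℝ) / n) = s' * (ψ₁s' - (m : ℝ) / n))
    (hneg : s' * (ψ₁s' - (m : ℝ) / n) < 0)
    (hineq : s * (1 + ψ₂s) ≤ s' * (1 + ψ₁s')) :
    ψ₂s ≤ ψ₁s + (d : ℝ) * (ψ₁s' - ψ₁s) / ((m : ℝ) - n * ψ₁s') := by
  have hn' : (0 : ℝ) < n := by exact_mod_cast hn
  have hb : 0 < (m : ℝ) - n * ψ₁s' := by
    have hψ := neg_of_mul_neg_right hneg hs'.le
    rw [sub_neg, lt_div_iff₀ hn'] at hψ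
    linarith
  have hscale := mul_sub_mul_eq_of_mul_sub_div_eq hn'.ne' heq
  rw [hd, Nat.cast_add]
  exact le_add_div_of_mul_sub_le hb (mul_le_mul_of_mul_eq_of_mul_le hs hb.le hscale hineq)

/-- Second half of Lemma 1 (arithmetic content): from
`s(ψ₁(s) − m/n) = s′(ψ₁(s′) − m/n) < 0` and `s(1 + ψ₂(s)) ≤ s′(1 + ψ₁(s′))`,
with `s′ ≥ s`, one gets `ψ₂(s) ≤ ψ₁(s) + d·(ψ₁(s′) − ψ₁(s))/(m − n·ψ₁(s′))`. -/
theorem stmt_6 (m n : ℕ) (hm : 0 < m) (hn : 0 < n) (d : ℕ) (hd : d = m + n)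
    (hd3 : 3 ≤ d) (s s' ψ₁s ψ₁s' ψ₂s : ℝ) (hs : 0 < s) (hs' : 0 < s')
    (heq : s * (ψ₁s - (m : ℝ) / n) = s' * (ψ₁s' - (m : ℝ) / n))
    (hneg : s' * (ψ₁s' - (m : ℝ) / n) < 0)
    (hineq : s * (1 + ψ₂s) ≤ s' * (1 + ψ₁s'))
    (hge : s ≤ s') :
    ψ₂s ≤ ψ₁s + (d : ℝ) * (ψ₁s' - ψ₁s) / ((m : ℝ) - n * ψ₁s') :=
  stmt_6_general m n hn d hd s s' ψ₁s ψ₁s' ψ₂s hs hs' heq hneg hineq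
end

section
/- Let n ≥ 2, d ≥ 3, m = d − n ≥ 1, and let ψ, ψ′, Ψ₂ be reals with ψ ≤ 0, ψ′ ≤ 0, ψ′ ≠ −1, n + n·ψ′ > 0, Ψ₂ ≤ 2ψ + d·(ψ′ − ψ)/(n + n·ψ′), and ((d−1)/(d−2))·Ψ₂ ≤ ψ ≤ Ψ₂/2. If ψ′ ≥ (m−n)/(2n), then Ψ₂ ≤ 2ψ′; and if ψ′ ≤ (m−n)/(2n), then Ψ₂ ≤ (d−2)·ψ′/((m−1) − n·ψ′). -/
/-!
Write `q = n + n ψ'`. Clearing the denominator in (38) gives `Ψ₂ q ≤ ψ (2q - d) + d ψ'`,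
in which `ψ` appears only through the coefficient `2q - d`. The condition on `ψ'` is the sign
of that coefficient (`2q - d = 2n ψ' - (m - n)`), so the upper end `ψ ≤ Ψ₂ / 2` of the sandwich
eliminates `ψ` when `2q ≥ d` and the lower end `(d - 1)/(d - 2) Ψ₂ ≤ ψ` when `2q ≤ d`.
In the second case the coefficient of `Ψ₂` becomes `d - 1 - q = m - 1 - n ψ' ≥ d/2 - 1 > 0`.
-/

section Elimination

variable {K : Type*} [Field K] [LinearOrder K] [IsStrictOrderedRing K] {d q ψ ψ' Ψ : K}

theorem mul_le_mul_two_mul_sub_add_of_le_add_div (hq : 0 < q)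
    (h : Ψ ≤ 2 * ψ + d * (ψ' - ψ) / q) : Ψ * q ≤ ψ * (2 * q - d) + d * ψ' := by
  rw [← sub_le_iff_le_add', le_div_iff₀ hq] at h
  linarith

theorem le_two_mul_of_le_half (hd : 0 < d) (hdq : d ≤ 2 * q)
    (h : Ψ * q ≤ ψ * (2 * q - d) + d * ψ') (hψ : ψ ≤ Ψ / 2) : Ψ ≤ 2 * ψ' := by
  have : ψ * (2 * q - d) ≤ Ψ / 2 * (2 * q - d) :=
    mul_le_mul_of_nonneg_right hψ (sub_nonneg.2 hdq)
  nlinarith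

theorem le_mul_div_of_div_mul_le (hd : 2 < d) (hdq : 2 * q ≤ d)
    (h : Ψ * q ≤ ψ * (2 * q - d) + d * ψ') (hψ : (d - 1) / (d - 2) * Ψ ≤ ψ) :
    Ψ ≤ (d - 2) * ψ' / (d - 1 - q) := by
  have hd2 : 0 < d - 2 := sub_pos.2 hd
  rw [div_mul_eq_mul_div, div_le_iff₀ hd2] at hψ
  rw [le_div_iff₀ (by linarith)]
  have : ψ * (d - 2) * (2 * q - d) ≤ (d - 1) * Ψ * (2 * q - d) :=
    mul_le_mul_of_nonpos_right hψ (by linarith)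
  -- multiplying `h` by `d - 2` and substituting gives `d (d - 1 - q) Ψ ≤ d (d - 2) ψ'`
  nlinarith

end Elimination

theorem stmt_7_general (n d m : ℕ) (hn : 2 ≤ n) (hd : 3 ≤ d) (hm : m = d - n) (hm1 : 1 ≤ m)
    (ψ ψ' Ψ₂ : ℝ)
    (hden : (n : ℝ) + n * ψ' > 0)
    (hΨ : Ψ₂ ≤ 2 * ψ + (d : ℝ) * (ψ' - ψ) / ((n : ℝ) + n * ψ'))
    (hsand₁ : (((d : ℝ) - 1) / ((d : ℝ) - 2)) * Ψ₂ ≤ ψ)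
    (hsand₂ : ψ ≤ Ψ₂ / 2) :
    (ψ' ≥ ((m : ℝ) - n) / (2 * n) → Ψ₂ ≤ 2 * ψ') ∧
    (ψ' ≤ ((m : ℝ) - n) / (2 * n) →
      Ψ₂ ≤ ((d : ℝ) - 2) * ψ' / (((m : ℝ) - 1) - n * ψ')) := by
  have hmR : (m : ℝ) = d - n := by rw [hm, Nat.cast_sub (by omega)]
  have hdR : (3 : ℝ) ≤ d := by exact_mod_cast hd
  have h2n : (0 : ℝ) < 2 * n := by positivity
  have hcleared := mul_le_mul_two_mul_sub_add_of_le_add_div hden hΨ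
  refine ⟨fun hψ' => le_two_mul_of_le_half (by linarith) ?_ hcleared hsand₂,
    fun hψ' => ?_⟩
  · rw [ge_iff_le, div_le_iff₀ h2n, hmR] at hψ'
    linarith
  · rw [le_div_iff₀ h2n, hmR] at hψ'
    rw [show (m : ℝ) - 1 - n * ψ' = d - 1 - (n + n * ψ') by rw [hmR]; ring]
    exact le_mul_div_of_div_mul_le (by linarith) (by linarith) hcleared hsand₁

/-- Algebraic core of the first case in the proof of Corollary 2: eliminating
`ψ₁(s)` from inequality (38) using the sandwich (39) yields inequality (41). -/
theorem stmt_7 (n d m : ℕ) (hn : 2 ≤ n) (hd : 3 ≤ d) (hm : m = d - n) (hm1 : 1 ≤ m)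
    (ψ ψ' Ψ₂ : ℝ) (hψ : ψ ≤ 0) (hψ' : ψ' ≤ 0) (hne : ψ' ≠ -1)
    (hden : (n : ℝ) + n * ψ' > 0)
    (hΨ : Ψ₂ ≤ 2 * ψ + (d : ℝ) * (ψ' - ψ) / ((n : ℝ) + n * ψ'))
    (hsand₁ : (((d : ℝ) - 1) / ((d : ℝ) - 2)) * Ψ₂ ≤ ψ)
    (hsand₂ : ψ ≤ Ψ₂ / 2) :
    (ψ' ≥ ((m : ℝ) - n) / (2 * n) → Ψ₂ ≤ 2 * ψ') ∧
    (ψ' ≤ ((m : ℝ) - n) / (2 * n) →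
      Ψ₂ ≤ ((d : ℝ) - 2) * ψ' / (((m : ℝ) - 1) - n * ψ')) :=
  stmt_7_general n d m hn hd hm hm1 ψ ψ' Ψ₂ hden hΨ hsand₁ hsand₂
end
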